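/- Fix reals S_A>0, θ≥0, λ>0 and V>0. Then V ≤ v_th(λ,0) if and only if ν̂(V, S_A·S_M/(S_A+S_M)) + λ·(1+θ·S_M) ≥ V for every S_M ≥ 0. -/

import Mathlib

/-! Clearing the positive denominator `S_A + S_M + V S_A S_M`, the myopic gain
`ν̂ + λ(1 + θ S_M) - V` becomes a quadratic `a S_M² + b S_M + c` with `a ≥ 0` and
`c = λ S_A > 0`, which is nonnegative on `[0, ∞)` exactly when `b ≥ -2√(ac)`. With
`t = √(λθ)` and `s = √(λ/S_A + λV)` one has `√(ac) = S_A t s` and `b = S_A (s² + t² - V²)`,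
so the condition is `V ≤ t + s`. Since `s` depends on `V`, this is a quadratic inequality
in `V - t`, whose larger root gives `v_th(λ,0)`. -/

/-- Posterior variance update: `ν̂(V,Λ) = V/(1+V·Λ)`. -/
noncomputable def nuhat (V Lam : ℝ) : ℝ := V / (1 + V * Lam)

/-- The threshold `v_th(λ,0)`. -/
noncomputable def vth0 (SA th lam : ℝ) : ℝ :=
  Real.sqrt (lam * th) + lam / 2 +
    Real.sqrt lam * Real.sqrt (Real.sqrt (lam * th) + lam / 4 + 1 / SA)

open Real

theorem quadratic_nonneg_on_nonneg_iff {a b c : ℝ} (ha : 0 ≤ a) (hc : 0 ≤ c) :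
    (∀ x : ℝ, 0 ≤ x → 0 ≤ a * x ^ 2 + b * x + c) ↔ -(2 * √(a * c)) ≤ b := by
  constructor
  · intro h
    by_contra! hb
    have hb0 : b < 0 := by linarith [Real.sqrt_nonneg (a * c)]
    rcases ha.eq_or_lt with rfl | ha0
    · have hx := h ((c + 1) / -b) (div_nonneg (by linarith) (by linarith))
      have e : b * ((c + 1) / -b) = -(c + 1) := by field_simp [hb0.ne]
      linarith
    · have hdisc : 4 * (a * c) < b ^ 2 := by
        have h2 := pow_lt_pow_left₀ (show 2 * √(a * c) < -b by linarith) (by positivity)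
          two_ne_zero
        rw [mul_pow, Real.sq_sqrt (by positivity), neg_sq] at h2
        linarith
      -- the value at the vertex `-b / (2a)`
      have hx := h (-b / (2 * a)) (div_nonneg (by linarith) (by linarith))
      have e : a * (-b / (2 * a)) ^ 2 + b * (-b / (2 * a)) + c
          = (4 * (a * c) - b ^ 2) / (4 * a) := by
        field_simp; ring
      have hneg : (4 * (a * c) - b ^ 2) / (4 * a) < 0 :=
        div_neg_of_neg_of_pos (by linarith) (by positivity)
      linarith
  · intro hb x hx
    have hamgm : 2 * √(a * c) * x ≤ a * x ^ 2 + c := by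
      rw [Real.sqrt_mul ha]
      nlinarith [sq_nonneg (√a * x - √c), Real.sq_sqrt ha, Real.sq_sqrt hc]
    nlinarith [mul_le_mul_of_nonneg_right hb hx]

theorem le_sqrt_add_mul_iff {u p K : ℝ} (hp : 0 ≤ p) (hK : 0 ≤ K) :
    u ≤ √(K + p * u) ↔ u ≤ p / 2 + √(p ^ 2 / 4 + K) := by
  -- `p / 2 + √(p ^ 2 / 4 + K)` is the larger root of `u ^ 2 = K + p * u`
  have hp2 : p / 2 ≤ √(p ^ 2 / 4 + K) := Real.le_sqrt_of_sq_le (by linarith)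
  rcases le_or_gt u 0 with hu | hu
  · exact iff_of_true (hu.trans (Real.sqrt_nonneg _)) (by linarith)
  calc u ≤ √(K + p * u) ↔ (u - p / 2) ^ 2 ≤ p ^ 2 / 4 + K := by
        rw [Real.le_sqrt' hu]; constructor <;> intro h <;> linarith
    _ ↔ u ≤ p / 2 + √(p ^ 2 / 4 + K) := by
        rw [Real.sq_le (by positivity)]; constructor
        · intro h; linarith [h.2]
        · intro h; constructor <;> linarith

theorem nuhat_add_sub_eq {SA th lam V SM : ℝ} (hSA : 0 < SA) (hV : 0 ≤ V) (hSM : 0 ≤ SM) :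
    nuhat V (SA * SM / (SA + SM)) + lam * (1 + th * SM) - V =
      (lam * th * (1 + V * SA) * SM ^ 2 +
          (lam * (1 + V * SA) + lam * th * SA - V ^ 2 * SA) * SM + lam * SA) /
        (SA + SM + V * SA * SM) := by
  have hD : 0 < SA + SM + V * SA * SM := by positivity
  have h2 : 0 < SA + SM := by positivity
  rw [nuhat, eq_div_iff hD.ne']
  field_simp
  ring

theorem neg_two_sqrt_le_iff {SA th lam V : ℝ} (hSA : 0 < SA) (hth : 0 ≤ th) (hlam : 0 ≤ lam)
    (hV : 0 ≤ V) :
    -(2 * √(lam * th * (1 + V * SA) * (lam * SA))) ≤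
        lam * (1 + V * SA) + lam * th * SA - V ^ 2 * SA ↔
      V ≤ √(lam * th) + √(lam / SA + lam * V) := by
  set t := √(lam * th)
  set s := √(lam / SA + lam * V)
  have ht : t ^ 2 = lam * th := Real.sq_sqrt (by positivity)
  have hs : s ^ 2 = lam / SA + lam * V := Real.sq_sqrt (by positivity)
  have hprod : √(lam * th * (1 + V * SA) * (lam * SA)) = SA * (t * s) := by
    rw [← Real.sqrt_sq (by positivity : 0 ≤ SA * (t * s))]
    congr 1
    rw [mul_pow, mul_pow, ht, hs]
    field_simp
  have hb : lam * (1 + V * SA) + lam * th * SA - V ^ 2 * SA = SA * (s ^ 2 + t ^ 2 - V ^ 2) := by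
    rw [ht, hs]; field_simp
  rw [hprod, hb, ← pow_le_pow_iff_left₀ hV (by positivity) two_ne_zero]
  constructor <;> intro h <;> nlinarith

theorem le_vth0_iff {SA th lam V : ℝ} (hSA : 0 < SA) (hlam : 0 ≤ lam) :
    V ≤ vth0 SA th lam ↔ V ≤ √(lam * th) + √(lam / SA + lam * V) := by
  set t := √(lam * th)
  have key := le_sqrt_add_mul_iff (u := V - t) hlam
    (by positivity : 0 ≤ lam * t + lam / SA)
  have e1 : lam * t + lam / SA + lam * (V - t) = lam / SA + lam * V := by ring
  have e2 : √lam * √(t + lam / 4 + 1 / SA) = √(lam ^ 2 / 4 + (lam * t + lam / SA)) := by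
    rw [← Real.sqrt_mul hlam]; congr 1; field_simp; ring
  rw [e1] at key
  rw [vth0, e2]
  constructor <;> intro h
  · linarith [key.mpr (by linarith)]
  · linarith [key.mp (by linarith)]

/-- `V ≤ v_th(λ,0)` iff activating a single sensor never pays
off myopically: `ν̂(V, S_A·S_M/(S_A+S_M)) + λ·(1+θ·S_M) ≥ V` for all `S_M ≥ 0`. -/
theorem stmt_14 (SA th lam V : ℝ) (hSA : 0 < SA) (hth : 0 ≤ th)
    (hlam : 0 < lam) (hV : 0 < V) :
    V ≤ vth0 SA th lam ↔
      ∀ SM : ℝ, 0 ≤ SM →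
        nuhat V (SA * SM / (SA + SM)) + lam * (1 + th * SM) ≥ V := by
  rw [le_vth0_iff hSA hlam.le, ← neg_two_sqrt_le_iff hSA hth hlam.le hV.le,
    ← quadratic_nonneg_on_nonneg_iff (by positivity) (by positivity)]
  refine forall₂_congr fun SM hSM => ?_
  have hD : 0 < SA + SM + V * SA * SM := by positivity
  rw [ge_iff_le, ← sub_nonneg (b := V), nuhat_add_sub_eq hSA hV.le hSM, le_div_iff₀ hD,
    zero_mul]
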